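/- arXiv:1503.04070 — 5 statements merged into one kernel-verified Lean document; each statement's English description precedes it below -/
import Mathlib

section
/- Let 𝔽 be a field, let n ≥ 1 and k ≥ 0, let M be a k×n matrix over 𝔽, and let J_M be the associated bounded juggling pattern. For all integers i ≤ j with j − i + 1 ≤ n, the rank of the k×(j−i+1) matrix whose columns are v(i), v(i+1), …, v(j) (the cyclically repeated columns of M) equals the number of indices i′ ∈ [i, j] with J_M(i′) > j; equivalently, it equals |[i,j] \ J_M([i,j])|, the number of elements of the interval [i,j] not in the image of [i,j] under J_M. -/
noncomputable section
noncomputable section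

/-- The `n`-periodic sequence of columns of a `k × n` matrix: `colSeq hn M i`
is the `(i mod n)`-th column of `M`. -/
def colSeq {𝔽 : Type*} [Field 𝔽] {k n : ℕ} (hn : 0 < n)
    (M : Matrix (Fin k) (Fin n) 𝔽) (i : ℤ) : Fin k → 𝔽 :=
  fun r => M r ⟨(i % (n : ℤ)).toNat, by
    have h1 : 0 ≤ i % (n : ℤ) := Int.emod_nonneg i (by exact_mod_cast hn.ne')
    have h2 : i % (n : ℤ) < (n : ℤ) := Int.emod_lt_of_pos i (by exact_mod_cast hn)
    omega⟩

/-- `v i ∈ span (v (i+1), …, v j)`; the span of the empty family is `{0}`. -/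
def spanCond {𝔽 : Type*} [Field 𝔽] {k n : ℕ} (hn : 0 < n)
    (M : Matrix (Fin k) (Fin n) 𝔽) (i j : ℤ) : Prop :=
  colSeq hn M i ∈ Submodule.span 𝔽 (colSeq hn M '' Set.Ioc i j)

/-- The juggling function of the matrix `M`:
`J_M i = min { j ≥ i : v i ∈ span (v (i+1), …, v j) }`. -/
def JM {𝔽 : Type*} [Field 𝔽] {k n : ℕ} (hn : 0 < n)
    (M : Matrix (Fin k) (Fin n) 𝔽) (i : ℤ) : ℤ :=
  sInf {j : ℤ | i ≤ j ∧ spanCond hn M i j}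

/-
Adding the columns `v j, v (j-1), …, v i` one at a time, the dimension of their span goes up
by one exactly when the new column `v i'` is not in the span of `v (i'+1), …, v j`, that is, when
`J_M i' > j`. For the second count, `J_M` is injective: if `J_M a = J_M b = m` with `a < b`, the
exchange lemma puts `v m` into the span of `v (a+1), …, v (m-1)`, so `v a` already lies in that
span, contradicting the minimality of `J_M a`. As moreover `i' ≤ J_M i'`, the points of `[i,j]`
hit by `J_M` correspond bijectively to the `i' ∈ [i,j]` with `J_M i' ≤ j`.
-/

open Module Submodule Finset

section

variable {K V : Type*} [Field K] [AddCommGroup V] [Module K V] [FiniteDimensional K V]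

open scoped Classical

theorem finrank_span_insert_of_notMem {x : V} {s : Set V} (hx : x ∉ span K s) :
    finrank K (span K (insert x s)) = finrank K (span K s) + 1 := by
  rw [span_insert, sup_comm, finrank_sup_span_singleton hx]

theorem finrank_span_image_Icc_add_one {v : ℤ → V} {i j : ℤ} (hij : i ≤ j)
    (ih : finrank K (span K (v '' Set.Icc (i + 1) j)) =
      #{i' ∈ Icc (i + 1) j | v i' ∉ span K (v '' Set.Ioc i' j)}) :
    finrank K (span K (v '' Set.Icc i j)) =
      #{i' ∈ Icc i j | v i' ∉ span K (v '' Set.Ioc i' j)} := by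
  rw [Set.Icc_add_one_left_eq_Ioc, Icc_add_one_left_eq_Ioc] at ih
  rw [← Set.Ioc_insert_left hij, Set.image_insert_eq, ← Finset.Ioc_insert_left hij,
    filter_insert]
  by_cases hi : v i ∈ span K (v '' Set.Ioc i j)
  · rw [span_insert_eq_span hi, if_neg (not_not.2 hi), ih]
  · rw [finrank_span_insert_of_notMem hi, if_pos hi, card_insert_of_notMem (by simp), ih]

theorem finrank_span_image_Icc (v : ℤ → V) (i j : ℤ) :
    finrank K (span K (v '' Set.Icc i j)) =
      #{i' ∈ Icc i j | v i' ∉ span K (v '' Set.Ioc i' j)} := by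
  obtain hji | hij := lt_or_ge (j + 1) i
  · simp [Set.Icc_eq_empty_of_lt (by omega : j < i), Icc_eq_empty_of_lt (by omega : j < i)]
  induction i, hij using Int.leInductionDown with
  | base => simp
  | pred i hi ih =>
    exact finrank_span_image_Icc_add_one (by omega) (by rwa [sub_add_cancel])

end

theorem card_Icc_sdiff_image {α : Type*} [LinearOrder α] [LocallyFiniteOrder α]
    {f : α → α} {i j : α} (hf : Set.InjOn f (Icc i j)) (hle : ∀ x ∈ Icc i j, x ≤ f x) :
    #(Icc i j \ (Icc i j).image f) = #{x ∈ Icc i j | j < f x} := by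
  have hinter : Icc i j ∩ (Icc i j).image f = {x ∈ Icc i j | f x ≤ j}.image f := by
    ext y
    simp only [mem_inter, mem_image, mem_filter, mem_Icc]
    constructor
    · rintro ⟨hy, x, hx, rfl⟩
      exact ⟨x, ⟨hx, hy.2⟩, rfl⟩
    · rintro ⟨x, ⟨hx, hxj⟩, rfl⟩
      exact ⟨⟨hx.1.trans (hle x (mem_Icc.2 hx)), hxj⟩, x, hx, rfl⟩
  have hsplit := card_filter_add_card_filter_not (s := Icc i j) (fun x => f x ≤ j)
  have hsdiff := card_sdiff_add_card_inter (Icc i j) ((Icc i j).image f)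
  rw [hinter, card_image_of_injOn (hf.mono (coe_subset.2 (filter_subset _ _)))] at hsdiff
  simp only [not_le] at hsplit
  omega

section JugglingFunction

variable {𝔽 : Type*} [Field 𝔽] {k n : ℕ} {hn : 0 < n} {M : Matrix (Fin k) (Fin n) 𝔽}

theorem colSeq_add_period (i : ℤ) : colSeq hn M (i + n) = colSeq hn M i := by
  ext r
  simp only [colSeq, Int.add_emod_right]

theorem spanCond_mono {i j j' : ℤ} (hj : j ≤ j') (h : spanCond hn M i j) :
    spanCond hn M i j' :=
  span_mono (Set.image_mono (Set.Ioc_subset_Ioc_right hj)) h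

theorem JM_mem (i : ℤ) : JM hn M i ∈ {j : ℤ | i ≤ j ∧ spanCond hn M i j} := by
  -- `v i = v (i + n)`, so the set defining `JM` contains `i + n`.
  have hne : {j : ℤ | i ≤ j ∧ spanCond hn M i j}.Nonempty :=
    ⟨i + n, by omega, subset_span ⟨i + n, ⟨by omega, le_rfl⟩, colSeq_add_period i⟩⟩
  exact Int.csInf_mem hne ⟨i, fun _ hj => hj.1⟩

theorem le_JM (i : ℤ) : i ≤ JM hn M i := (JM_mem i).1

theorem spanCond_JM (i : ℤ) : spanCond hn M i (JM hn M i) := (JM_mem i).2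

theorem JM_le_iff {i j : ℤ} (hij : i ≤ j) : JM hn M i ≤ j ↔ spanCond hn M i j :=
  ⟨fun h => spanCond_mono h (spanCond_JM i),
    fun h => csInf_le ⟨i, fun _ hj => hj.1⟩ ⟨hij, h⟩⟩

theorem JM_lt_of_mem_span_Ioo {i j : ℤ} (hij : i < j)
    (h : colSeq hn M i ∈ span 𝔽 (colSeq hn M '' Set.Ioo i j)) : JM hn M i < j := by
  have : JM hn M i ≤ j - 1 := by
    rw [JM_le_iff (by omega), spanCond]
    rwa [← Set.Ioc_sub_one_right_eq_Ioo] at h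
  omega

theorem colSeq_JM_mem_span_Ioo {a b : ℤ} (hab : a < b) :
    colSeq hn M (JM hn M b) ∈ span 𝔽 (colSeq hn M '' Set.Ioo a (JM hn M b)) := by
  have hspan := spanCond_JM (hn := hn) (M := M) b
  obtain heq | hlt := (le_JM (hn := hn) (M := M) b).eq_or_lt
  · rw [spanCond, ← heq, Set.Ioc_self, Set.image_empty, span_empty, mem_bot] at hspan
    rw [← heq, hspan]
    exact zero_mem _
  · rw [spanCond, ← Set.Ioo_insert_right hlt, Set.image_insert_eq] at hspan
    have hnot : colSeq hn M b ∉ span 𝔽 (colSeq hn M '' Set.Ioo b (JM hn M b)) :=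
      fun h => (JM_lt_of_mem_span_Ioo hlt h).false
    refine span_mono ?_ (mem_span_insert_exchange hspan hnot)
    rw [← Set.image_insert_eq]
    exact Set.image_mono fun x hx => by
      rcases hx with rfl | ⟨hx₁, hx₂⟩ <;> constructor <;> omega

theorem JM_injective : Function.Injective (JM hn M) := by
  refine Function.Injective.of_lt_imp_ne fun a b hab heq => ?_
  have hlt : a < JM hn M a := hab.trans_le (heq ▸ le_JM b)
  have hspan := spanCond_JM (hn := hn) (M := M) a
  rw [spanCond, ← Set.Ioo_insert_right hlt, Set.image_insert_eq,
    span_insert_eq_span (heq ▸ colSeq_JM_mem_span_Ioo hab)] at hspan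
  exact (JM_lt_of_mem_span_Ioo hlt hspan).false

theorem finrank_span_colSeq_Icc (i j : ℤ) :
    finrank 𝔽 (span 𝔽 (colSeq hn M '' Set.Icc i j)) = #{i' ∈ Icc i j | j < JM hn M i'} := by
  classical
  rw [finrank_span_image_Icc]
  congr 1
  refine filter_congr fun i' hi' => ?_
  rw [← not_le, JM_le_iff (mem_Icc.1 hi').2, spanCond]

end JugglingFunction

theorem rank_eq_escaping_count_general {𝔽 : Type*} [Field 𝔽] (k n : ℕ) (hn : 0 < n)
    (M : Matrix (Fin k) (Fin n) 𝔽) (i j : ℤ) :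
    (Matrix.of fun (r : Fin k) (c : ↥(Finset.Icc i j)) => colSeq hn M (c : ℤ) r).rank
        = ((Finset.Icc i j).filter (fun i' => j < JM hn M i')).card ∧
    (Matrix.of fun (r : Fin k) (c : ↥(Finset.Icc i j)) => colSeq hn M (c : ℤ) r).rank
        = ((Finset.Icc i j) \ (Finset.Icc i j).image (JM hn M)).card := by
  have hcols : Set.range (Matrix.of fun (r : Fin k) (c : ↥(Finset.Icc i j)) =>
      colSeq hn M (c : ℤ) r).col = colSeq hn M '' Set.Icc i j := by
    ext x
    constructor
    · rintro ⟨c, rfl⟩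
      exact ⟨c, mem_Icc.1 c.2, rfl⟩
    · rintro ⟨c, hc, rfl⟩
      exact ⟨⟨c, mem_Icc.2 hc⟩, rfl⟩
  have hrank : (Matrix.of fun (r : Fin k) (c : ↥(Finset.Icc i j)) => colSeq hn M (c : ℤ) r).rank
      = ((Finset.Icc i j).filter (fun i' => j < JM hn M i')).card := by
    rw [Matrix.rank_eq_finrank_span_cols, hcols, finrank_span_colSeq_Icc]
  exact ⟨hrank, hrank.trans (card_Icc_sdiff_image JM_injective.injOn fun x _ => le_JM x).symm⟩

/-- For integers `i ≤ j` with `j - i + 1 ≤ n`, the rank of the `k × (j-i+1)`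
matrix with columns `v i, v (i+1), …, v j` equals the number of `i' ∈ [i,j]`
with `J_M i' > j`, and also equals `|[i,j] \ J_M([i,j])|`. -/
theorem rank_eq_escaping_count {𝔽 : Type*} [Field 𝔽] (k n : ℕ) (hn : 0 < n)
    (M : Matrix (Fin k) (Fin n) 𝔽) (i j : ℤ) (hij : i ≤ j)
    (hlen : j - i + 1 ≤ (n : ℤ)) :
    (Matrix.of fun (r : Fin k) (c : ↥(Finset.Icc i j)) => colSeq hn M (c : ℤ) r).rank
        = ((Finset.Icc i j).filter (fun i' => j < JM hn M i')).card ∧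
    (Matrix.of fun (r : Fin k) (c : ↥(Finset.Icc i j)) => colSeq hn M (c : ℤ) r).rank
        = ((Finset.Icc i j) \ (Finset.Icc i j).image (JM hn M)).card :=
  rank_eq_escaping_count_general k n hn M i j

end
end
end

section
/- Let 𝔽 be a field, let n ≥ 1 and k ≥ 0, and let M be a k×n matrix over 𝔽 with associated bounded juggling pattern J_M. Then the ball number of J_M, namely (1/n)·∑_{i=1}^{n} (J_M(i) − i), equals the rank of M. -/
noncomputable section
noncomputable section

/-! With `r a b := dim span (v (a+1), …, v b)`, adjoining `v i` to the window `v (i+1), …, v j`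
raises its dimension exactly when `j < J i`, so `J i - i = ∑_{t<n} (r (i-1) (i+t) - r i (i+t))`.
Summed over a period, and since `r` is invariant under shifting both arguments by `n`, the double
sum telescopes in `t` to `∑_i r i (i+n) - ∑_i r i i = n · rank M`: any `n` consecutive columns
span the column space. -/

open Module Submodule Function

open Classical in
lemma finrank_span_insert {K V : Type*} [Field K] [AddCommGroup V] [Module K V]
    [Module.Finite K V] (x : V) (s : Set V) :
    finrank K (span K (insert x s)) = finrank K (span K s) + if x ∈ span K s then 0 else 1 := by
  split_ifs with hx
  · rw [span_insert_eq_span hx, add_zero]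
  · rw [span_insert, sup_comm, finrank_sup_span_singleton hx]

lemma sum_Icc_one_eq_sum_range {M : Type*} [AddCommMonoid M] (f : ℤ → M) (n : ℕ) :
    ∑ i ∈ Finset.Icc 1 (n : ℤ), f i = ∑ j ∈ Finset.range n, f (j + 1) := by
  refine Finset.sum_nbij' (fun i ↦ (i - 1).toNat) (fun j ↦ j + 1) ?_ ?_ ?_ ?_ ?_ <;>
    intro i hi <;> simp_all
  all_goals first | omega | (congr 1; omega)

lemma sum_range_succ_eq_sum_range {M : Type*} [AddCommMonoid M] [IsRightCancelAdd M]
    {f : ℕ → M} {n : ℕ} (h : f n = f 0) :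
    ∑ j ∈ Finset.range n, f (j + 1) = ∑ j ∈ Finset.range n, f j :=
  add_right_cancel (b := f 0) <| by rw [← Finset.sum_range_succ', Finset.sum_range_succ, h]

section Juggling

variable (K : Type*) {V : Type*} [Field K] [AddCommGroup V] [Module K V] (v : ℤ → V)

def windowRank (a b : ℤ) : ℕ := finrank K (span K (v '' Set.Ioc a b))

def juggling (i : ℤ) : ℤ := sInf {j | i ≤ j ∧ v i ∈ span K (v '' Set.Ioc i j)}

variable {K v}

lemma windowRank_self (a : ℤ) : windowRank K v a a = 0 := by
  rw [windowRank, Set.Ioc_self, Set.image_empty, span_empty, finrank_bot]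

open Classical in
lemma windowRank_sub_one [Module.Finite K V] {i j : ℤ} (h : i ≤ j) :
    windowRank K v (i - 1) j =
      windowRank K v i j + if v i ∈ span K (v '' Set.Ioc i j) then 0 else 1 := by
  have hIoc : Set.Ioc (i - 1) j = insert i (Set.Ioc i j) := by
    ext x; simp only [Set.mem_Ioc, Set.mem_insert_iff]; omega
  rw [windowRank, hIoc, Set.image_insert_eq, finrank_span_insert, windowRank]

namespace Function.Periodic

variable {c : ℤ}

lemma windowRank_add (hv : Periodic v c) (a b : ℤ) :
    windowRank K v (a + c) (b + c) = windowRank K v a b := by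
  rw [windowRank, ← Set.image_add_const_Ioc, Set.image_image,
    show (fun x ↦ v (x + c)) = v from funext hv, windowRank]

lemma windowRank_add_period (hv : Periodic v c) (hc : 0 < c) (a : ℤ) :
    windowRank K v a (a + c) = finrank K (span K (Set.range v)) := by
  rw [windowRank, hv.image_Ioc hc]

lemma juggling_spec (hv : Periodic v c) (hc : 0 < c) (i : ℤ) :
    i ≤ juggling K v i ∧ v i ∈ span K (v '' Set.Ioc i (juggling K v i)) := by
  have hbdd : BddBelow {j | i ≤ j ∧ v i ∈ span K (v '' Set.Ioc i j)} := ⟨i, fun j hj ↦ hj.1⟩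
  refine Int.csInf_mem ?_ hbdd
  exact ⟨i + c, by omega, subset_span ⟨i + c, ⟨by omega, le_rfl⟩, hv i⟩⟩

lemma juggling_le_iff (hv : Periodic v c) (hc : 0 < c) {i j : ℤ} (hij : i ≤ j) :
    juggling K v i ≤ j ↔ v i ∈ span K (v '' Set.Ioc i j) := by
  refine ⟨fun h ↦ ?_, fun h ↦ ?_⟩
  · exact span_mono (Set.image_mono (Set.Ioc_subset_Ioc_right h)) (hv.juggling_spec hc i).2
  · unfold juggling
    exact csInf_le ⟨i, fun j hj ↦ hj.1⟩ ⟨hij, h⟩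

lemma juggling_le_add (hv : Periodic v c) (hc : 0 < c) (i : ℤ) : juggling K v i ≤ i + c :=
  (hv.juggling_le_iff hc (by omega)).2 (subset_span ⟨i + c, ⟨by omega, le_rfl⟩, hv i⟩)

variable [Module.Finite K V] {n : ℕ}

lemma juggling_sub_self (hv : Periodic v n) (hn : 0 < n) (i : ℤ) :
    juggling K v i - i =
      ∑ t ∈ Finset.range n, ((windowRank K v (i - 1) (i + t) : ℤ) - windowRank K v i (i + t)) := by
  have hc : (0 : ℤ) < n := by exact_mod_cast hn
  have hterm : ∀ t ∈ Finset.range n, ((windowRank K v (i - 1) (i + t) : ℤ) -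
      windowRank K v i (i + t)) = if (t : ℤ) < juggling K v i - i then 1 else 0 := by
    intro t _
    have hit : i ≤ i + t := by omega
    rw [windowRank_sub_one hit, ← hv.juggling_le_iff (K := K) hc hit]
    split_ifs <;> omega
  have hlo := (hv.juggling_spec (K := K) hc i).1
  have hhi := hv.juggling_le_add (K := K) hc i
  rw [Finset.sum_congr rfl hterm, Finset.sum_boole,
    show (Finset.range n).filter (fun t : ℕ ↦ (t : ℤ) < juggling K v i - i) =
        Finset.range (juggling K v i - i).toNat by
      ext; simp only [Finset.mem_filter, Finset.mem_range, Int.lt_toNat]; omega,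
    Finset.card_range, Int.toNat_of_nonneg (by omega)]

theorem sum_juggling_sub_self (hv : Periodic v n) (hn : 0 < n) :
    ∑ i ∈ Finset.Icc 1 (n : ℤ), (juggling K v i - i) = n * finrank K (span K (Set.range v)) := by
  set R : ℕ → ℤ := fun t ↦ ∑ j ∈ Finset.range n, (windowRank K v j (j + t) : ℤ)
  have hshift (t : ℕ) :
      ∑ j ∈ Finset.range n, (windowRank K v (j + 1 : ℕ) ((j + 1 : ℕ) + t) : ℤ) = R t :=
    sum_range_succ_eq_sum_range (f := fun j : ℕ ↦ (windowRank K v j (j + t) : ℤ)) <| by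
      have h := hv.windowRank_add (K := K) 0 t
      rw [zero_add, add_comm (t : ℤ)] at h
      simp [h]
  calc ∑ i ∈ Finset.Icc 1 (n : ℤ), (juggling K v i - i)
      = ∑ j ∈ Finset.range n, ∑ t ∈ Finset.range n, ((windowRank K v j (j + (t + 1 : ℕ)) : ℤ) -
          windowRank K v (j + 1 : ℕ) ((j + 1 : ℕ) + t)) := by
        rw [sum_Icc_one_eq_sum_range]
        refine Finset.sum_congr rfl fun j _ ↦ ?_
        rw [hv.juggling_sub_self hn]
        push_cast; ring_nf
    _ = ∑ t ∈ Finset.range n, (R (t + 1) - R t) := by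
        rw [Finset.sum_comm]
        simp only [Finset.sum_sub_distrib, hshift, R]
    _ = n * finrank K (span K (Set.range v)) := by
        rw [Finset.sum_range_sub]
        simp [R, windowRank_self, hv.windowRank_add_period (by omega : (0 : ℤ) < n)]

end Function.Periodic

end Juggling

lemma colSeq_periodic {𝔽 : Type*} [Field 𝔽] {k n : ℕ} (hn : 0 < n)
    (M : Matrix (Fin k) (Fin n) 𝔽) : Periodic (colSeq hn M) n := by
  intro i
  funext r
  simp [colSeq, Int.add_emod_right]

lemma range_colSeq {𝔽 : Type*} [Field 𝔽] {k n : ℕ} (hn : 0 < n)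
    (M : Matrix (Fin k) (Fin n) 𝔽) : Set.range (colSeq hn M) = Set.range M.col := by
  refine Set.Subset.antisymm (Set.range_subset_iff.2 fun i ↦ ⟨_, rfl⟩) ?_
  rintro _ ⟨j, rfl⟩
  refine ⟨j, funext fun r ↦ ?_⟩
  simp [colSeq, Int.emod_eq_of_lt]

/-- The ball number of the bounded juggling pattern `J_M` associated to a
`k × n` matrix `M`, i.e. `(1/n) ∑_{i=1}^n (J_M i - i)`, equals the rank of
`M`; equivalently `∑_{i=1}^n (J_M i - i) = n · rank M`. -/
theorem ballNumber_JM_eq_rank {𝔽 : Type*} [Field 𝔽] (k n : ℕ) (hn : 0 < n)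
    (M : Matrix (Fin k) (Fin n) 𝔽) :
    (∑ i ∈ Finset.Icc (1 : ℤ) (n : ℤ), (JM hn M i - i)) = (n : ℤ) * (M.rank : ℤ) := by
  have hJ : JM hn M = juggling 𝔽 (colSeq hn M) := rfl
  rw [hJ, (colSeq_periodic hn M).sum_juggling_sub_self hn, range_colSeq,
    ← Matrix.rank_eq_finrank_span_cols]
end
end
end

section
/- Let J be a bounded juggling pattern of period n with ball number k. Then exactly k of the indices i ∈ {1, …, n} satisfy J(i) > n, and exactly n − k of them satisfy J(i) ≤ n. (That is, the East triangle of J contains exactly k dots and the West triangle contains exactly n − k dots.) -/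
/-!
Reducing each landing position `J i` of a throw from the window `{1, …, n}` back into the
window (subtract `n` for East dots) gives a permutation of `{1, …, n}`, because `J` is injective
and commutes with the shift by `n`. Hence `∑ (J i - i)` equals `n` times the number of East
dots, which is `n k` by definition of the ball number.
-/

open Finset

section

variable {n : ℕ} {J : ℤ → ℤ}

/-- The position in the window `{1, …, n}` congruent to `J i` modulo `n`, for `1 ≤ i ≤ n`. -/
def landingSlot (n : ℕ) (J : ℤ → ℤ) (i : ℤ) : ℤ :=
  if (n : ℤ) < J i then J i - n else J i

lemma landingSlot_mem_Icc (hbd : ∀ i : ℤ, 0 ≤ J i - i ∧ J i - i ≤ n) {i : ℤ}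
    (hi : i ∈ Icc (1 : ℤ) n) : landingSlot n J i ∈ Icc (1 : ℤ) n := by
  rw [mem_Icc] at hi ⊢
  have := hbd i
  unfold landingSlot
  split_ifs <;> omega

lemma landingSlot_injOn (hinj : Function.Injective J) (hper : ∀ i : ℤ, J (i + n) = J i + n) :
    Set.InjOn (landingSlot n J) (Icc (1 : ℤ) n) := by
  intro i hi j hj hij
  simp only [coe_Icc, Set.mem_Icc] at hi hj
  unfold landingSlot at hij
  split_ifs at hij
  · exact hinj (by omega)
  · have := @hinj i (j + n) (by rw [hper]; omega)
    omega
  · have := @hinj j (i + n) (by rw [hper]; omega)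
    omega
  · exact hinj hij

lemma sum_landingSlot (hinj : Function.Injective J) (hper : ∀ i : ℤ, J (i + n) = J i + n)
    (hbd : ∀ i : ℤ, 0 ≤ J i - i ∧ J i - i ≤ n) :
    ∑ i ∈ Icc (1 : ℤ) n, landingSlot n J i = ∑ i ∈ Icc (1 : ℤ) n, i := by
  have hmaps : Set.MapsTo (landingSlot n J) (Icc (1 : ℤ) n) (Icc (1 : ℤ) n) :=
    fun i hi => landingSlot_mem_Icc hbd hi
  have hbij := ((Icc (1 : ℤ) n).finite_toSet.injOn_iff_bijOn_of_mapsTo hmaps).mp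
    (landingSlot_injOn hinj hper)
  exact sum_nbij (g := id) (landingSlot n J) (fun i hi => hmaps hi) hbij.injOn hbij.surjOn
    fun _ _ => rfl

lemma sum_sub_eq_mul_card_east (hinj : Function.Injective J)
    (hper : ∀ i : ℤ, J (i + n) = J i + n) (hbd : ∀ i : ℤ, 0 ≤ J i - i ∧ J i - i ≤ n) :
    ∑ i ∈ Icc (1 : ℤ) n, (J i - i) = n * #{i ∈ Icc (1 : ℤ) n | (n : ℤ) < J i} := by
  have hsplit : ∀ i,
      J i - i = (landingSlot n J i - i) + if (n : ℤ) < J i then (n : ℤ) else 0 := by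
    intro i
    unfold landingSlot
    split_ifs <;> ring
  rw [sum_congr rfl fun i _ => hsplit i, sum_add_distrib, sum_sub_distrib,
    sum_landingSlot hinj hper hbd, sub_self, zero_add, ← sum_filter, sum_const, nsmul_eq_mul,
    mul_comm]

end

/-- For a bounded juggling pattern `J` of period `n` with ball number `k`,
exactly `k` of the indices `i ∈ {1, …, n}` satisfy `J i > n` (the East
triangle has `k` dots) and exactly `n - k` satisfy `J i ≤ n` (the West
triangle has `n - k` dots). -/
theorem east_west_triangle_counts (n : ℕ) (hn : 1 ≤ n) (J : ℤ → ℤ)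
    (hbij : Function.Bijective J)
    (hper : ∀ i : ℤ, J (i + n) = J i + n)
    (hbd : ∀ i : ℤ, 0 ≤ J i - i ∧ J i - i ≤ n)
    (k : ℕ) (hk : ∑ i ∈ Finset.Icc (1 : ℤ) (n : ℤ), (J i - i) = (n : ℤ) * k) :
    ((Finset.Icc (1 : ℤ) (n : ℤ)).filter (fun i => (n : ℤ) < J i)).card = k ∧
    ((Finset.Icc (1 : ℤ) (n : ℤ)).filter (fun i => J i ≤ (n : ℤ))).card = n - k := by
  have heast : #{i ∈ Icc (1 : ℤ) n | (n : ℤ) < J i} = k := by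
    have h := (sum_sub_eq_mul_card_east hbij.injective hper hbd).symm.trans hk
    exact_mod_cast mul_left_cancel₀ (by omega : (n : ℤ) ≠ 0) h
  have hpartition :=
    card_filter_add_card_filter_not (s := Icc (1 : ℤ) n) (fun i => (n : ℤ) < J i)
  simp only [not_lt, Int.card_Icc] at hpartition
  exact ⟨heast, by omega⟩
end

section
/- Let J be a bounded juggling pattern of period n with ball number k, and define J∨ : ℤ → ℤ by J∨(i) := J^{−1}(i + n). Then J∨ is again a bounded juggling pattern of period n (i.e. J∨ is a bijection with J∨(i+n) = J∨(i) + n and 0 ≤ J∨(i) − i ≤ n for all i ∈ ℤ), and its ball number is n − k. (This is the combinatorial content of Grassmannian duality D(Π_J) = Π_{J^{−1}∘(i↦i+n)}, which carries positroid varieties in Gr(k,n) to positroid varieties in Gr(n−k,n).) -/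
/-!
A pattern `f` with `f (i + n) = f i + n` has an `n`-periodic displacement `i ↦ f i - i`, and
reducing modulo `n` turns `f` into a permutation of any window of `n` consecutive integers.
Hence summing a periodic function over a window is unchanged by precomposing with such a
bijection, and writing `J⁻¹ i - i = -(J (J⁻¹ i) - J⁻¹ i)` gives that the displacements of `J⁻¹`
sum to minus those of `J`. Shifting by `n` adds `n` to every displacement of `J⁻¹`, so the
dual pattern `i ↦ J⁻¹ (i + n)` has ball number `n - k`.
-/

open Function Finset

section Translation

variable {α : Type*} [AddCommGroup α] {p : α}

theorem Function.Semiconj.periodic_sub_self {f : α → α} (hf : Semiconj f (· + p) (· + p)) :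
    Periodic (fun x => f x - x) p := fun x => by
  change f (x + p) - (x + p) = f x - x
  rw [show f (x + p) = f x + p from hf x]
  abel

theorem Function.Semiconj.map_add_zsmul {f : α → α} (hf : Semiconj f (· + p) (· + p))
    (x : α) (m : ℤ) : f (x + m • p) = f x + m • p := by
  have : f (x + m • p) - (x + m • p) = f x - x := hf.periodic_sub_self.zsmul m x
  rw [← sub_add_cancel (f (x + m • p)) (x + m • p), this]
  abel

variable [LinearOrder α] [IsOrderedAddMonoid α] [Archimedean α] (hp : 0 < p)

theorem Function.Periodic.apply_toIcoMod {M : Type*} {g : α → M} (hg : Periodic g p)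
    (a x : α) : g (toIcoMod hp a x) = g x := by
  conv_rhs => rw [← toIcoMod_add_toIcoDiv_zsmul hp a x]
  exact (hg.zsmul _ _).symm

theorem Function.Semiconj.toIcoMod_apply_toIcoMod {f : α → α}
    (hf : Semiconj f (· + p) (· + p)) (a x : α) :
    toIcoMod hp a (f (toIcoMod hp a x)) = toIcoMod hp a (f x) := by
  conv_rhs => rw [← toIcoMod_add_toIcoDiv_zsmul hp a x, hf.map_add_zsmul, toIcoMod_add_zsmul]

end Translation

section WindowSums

variable {p : ℤ}

theorem toIcoMod_mem_finsetIco (hp : 0 < p) (a x : ℤ) : toIcoMod hp a x ∈ Ico a (a + p) :=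
  Finset.mem_coe.1 (Finset.coe_Ico a (a + p) ▸ toIcoMod_mem_Ico hp a x)

theorem sum_Ico_comp_eq_of_semiconj (hp : 0 < p) {M : Type*} [AddCommMonoid M] {g : ℤ → M}
    (hg : Periodic g p) {f f' : ℤ → ℤ} (hf : Semiconj f (· + p) (· + p))
    (hleft : LeftInverse f' f) (hright : RightInverse f' f) (a : ℤ) :
    ∑ i ∈ Ico a (a + p), g (f i) = ∑ i ∈ Ico a (a + p), g i := by
  have hf' := hf.inverse_left hleft hright
  have hfix : ∀ i ∈ Ico a (a + p), toIcoMod hp a i = i := fun i hi =>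
    (toIcoMod_eq_self hp).2 (Finset.coe_Ico a (a + p) ▸ hi)
  refine sum_nbij' (fun i => toIcoMod hp a (f i)) (fun j => toIcoMod hp a (f' j))
    (fun i _ => toIcoMod_mem_finsetIco hp a _) (fun j _ => toIcoMod_mem_finsetIco hp a _)
    (fun i hi => ?_) (fun j hj => ?_) (fun i _ => (hg.apply_toIcoMod hp a _).symm)
  · simp only [hf'.toIcoMod_apply_toIcoMod hp, hleft i, hfix i hi]
  · simp only [hf.toIcoMod_apply_toIcoMod hp, hright j, hfix j hj]

theorem sum_Ico_inverse_sub_self (hp : 0 < p) {f f' : ℤ → ℤ} (hf : Semiconj f (· + p) (· + p))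
    (hleft : LeftInverse f' f) (hright : RightInverse f' f) (a : ℤ) :
    ∑ i ∈ Ico a (a + p), (f' i - i) = -∑ i ∈ Ico a (a + p), (f i - i) := by
  calc ∑ i ∈ Ico a (a + p), (f' i - i)
      = -∑ i ∈ Ico a (a + p), (f (f' i) - f' i) := by
        rw [← sum_neg_distrib]
        exact sum_congr rfl fun i _ => by rw [hright i]; ring
    _ = -∑ i ∈ Ico a (a + p), (f i - i) := by
        rw [sum_Ico_comp_eq_of_semiconj hp (g := fun x => f x - x) hf.periodic_sub_self
          (hf.inverse_left hleft hright) hright.leftInverse hleft.rightInverse]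

end WindowSums

/-- If `J` is a bounded juggling pattern of period `n` with ball number `k`
(and `Jinv` is its two-sided inverse), then the dual pattern
`J∨ : i ↦ J⁻¹ (i + n)` is again a bounded juggling pattern of period `n`,
with ball number `n - k`. -/
theorem dual_juggling_pattern (n : ℕ) (hn : 1 ≤ n) (J Jinv : ℤ → ℤ)
    (hleft : Function.LeftInverse Jinv J)
    (hright : Function.RightInverse Jinv J)
    (hper : ∀ i : ℤ, J (i + n) = J i + n)
    (hbd : ∀ i : ℤ, 0 ≤ J i - i ∧ J i - i ≤ n)
    (k : ℤ) (hk : ∑ i ∈ Finset.Icc (1 : ℤ) (n : ℤ), (J i - i) = (n : ℤ) * k) :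
    Function.Bijective (fun i : ℤ => Jinv (i + n)) ∧
    (∀ i : ℤ, Jinv ((i + n) + n) = Jinv (i + n) + n) ∧
    (∀ i : ℤ, 0 ≤ Jinv (i + n) - i ∧ Jinv (i + n) - i ≤ n) ∧
    (∑ i ∈ Finset.Icc (1 : ℤ) (n : ℤ), (Jinv (i + n) - i)) = (n : ℤ) * ((n : ℤ) - k) := by
  have hn0 : (0 : ℤ) < n := by exact_mod_cast hn
  have hJ : Semiconj J (· + (n : ℤ)) (· + (n : ℤ)) := hper
  have hJinv := hJ.inverse_left hleft hright
  have hwindow : Icc (1 : ℤ) n = Ico 1 (1 + (n : ℤ)) := by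
    rw [add_comm, Ico_add_one_right_eq_Icc]
  refine ⟨Bijective.comp ⟨hright.injective, hleft.surjective⟩
    (Equiv.addRight (n : ℤ)).bijective, fun i => hJinv (i + n), fun i => ?_, ?_⟩
  · have := hbd (Jinv (i + n))
    rw [hright] at this
    constructor <;> linarith
  · calc ∑ i ∈ Icc (1 : ℤ) n, (Jinv (i + n) - i)
        = ∑ i ∈ Icc (1 : ℤ) n, ((Jinv i - i) + n) :=
          sum_congr rfl fun i _ => by rw [hJinv.eq]; ring
      _ = -(n * k) + #(Icc (1 : ℤ) n) • (n : ℤ) := by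
          rw [sum_add_distrib, sum_const, ← hk, hwindow,
            sum_Ico_inverse_sub_self hn0 hJ hleft hright]
      _ = n * (n - k) := by
          rw [Int.card_Icc, add_sub_cancel_right, Int.toNat_natCast, nsmul_eq_mul]; ring
end

section
/- Let n ≥ 1 and let π be a partial injection from the set {1, …, n} to itself, defined on a subset D ⊆ {1,…,n}, such that π(i) ≥ i for all i ∈ D (an upper triangular partial permutation). Then there exists a unique bijection J : ℤ → ℤ satisfying: (a) J(i+n) = J(i) + n for all i ∈ ℤ; (b) 0 ≤ J(i) − i ≤ n for all i ∈ ℤ; (c) J(i) = π(i) for all i ∈ D; (d) J(i) > n for all i ∈ {1,…,n} \ D; and (e) J is strictly increasing on {1,…,n} \ D. In other words, every upper triangular partial permutation matrix extends uniquely to the window of a bounded juggling pattern whose East triangle runs northwest-to-southeast. -/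
/-!
A bounded juggling pattern is determined by its window `J|_{1,…,n}`, and the conditions pin that
window down: `J = π` on `D`, while on the empty rows `{1,…,n} \ D` injectivity and periodicity
force `J - n` into the empty columns `{1,…,n} \ π(D)`, increasingly, so the `k`-th empty row goes
to `n` plus the `k`-th empty column. Conversely this window extends periodically to a bijection,
since its residues mod `n` are a permutation. The bound `J i - i ≤ n` then says that the `k`-th
empty column does not exceed the `k`-th empty row: as `π` is upper triangular, at every height `t`
at least as many columns as rows are empty among `{1,…,t}`.
-/

open Finset Function

section AddPeriodic

variable {n : ℤ} {J J' : ℤ → ℤ}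

lemma map_add_mul_of_map_add (hJ : ∀ i, J (i + n) = J i + n) (i t : ℤ) :
    J (i + n * t) = J i + n * t := by
  simpa [mul_comm] using AddConstMapClass.map_add_zsmul (⟨J, hJ⟩ : AddConstMap ℤ ℤ n n) i t

lemma exists_mem_Icc_eq_add_mul (hn : 0 < n) (i : ℤ) :
    ∃ r ∈ Icc 1 n, ∃ t, i = r + n * t := by
  have hr := toIcoMod_mem_Ico hn 1 i
  rw [Set.mem_Ico] at hr
  refine ⟨toIcoMod hn 1 i, mem_Icc.2 ⟨hr.1, by omega⟩, toIcoDiv hn 1 i, ?_⟩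
  rw [mul_comm, ← smul_eq_mul, toIcoMod_add_toIcoDiv_zsmul]

lemma exists_map_add_eqOn_Icc (hn : 0 < n) (w : ℤ → ℤ) :
    ∃ J : ℤ → ℤ, (∀ i, J (i + n) = J i + n) ∧ ∀ r ∈ Icc 1 n, J r = w r := by
  refine ⟨fun i => w (toIcoMod hn 1 i) + toIcoDiv hn 1 i • n, fun i => ?_, fun r hr => ?_⟩
  · simp only [toIcoMod_add_right, toIcoDiv_add_right, add_smul, one_smul, add_assoc]
  · have hmod : toIcoMod hn 1 r = r := by
      rw [toIcoMod_eq_self, Set.mem_Ico]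
      rw [mem_Icc] at hr
      omega
    have hdiv := toIcoMod_add_toIcoDiv_zsmul hn 1 r
    rw [hmod, add_eq_left] at hdiv
    simp only [hmod, hdiv, add_zero]

lemma eq_of_eqOn_Icc (hn : 0 < n) (hJ : ∀ i, J (i + n) = J i + n)
    (hJ' : ∀ i, J' (i + n) = J' i + n) (h : ∀ r ∈ Icc 1 n, J r = J' r) : J = J' := by
  funext i
  obtain ⟨r, hr, t, rfl⟩ := exists_mem_Icc_eq_add_mul hn i
  rw [map_add_mul_of_map_add hJ, map_add_mul_of_map_add hJ', h r hr]

lemma exists_mem_Icc_sub_eq_sub (hn : 0 < n) (hJ : ∀ i, J (i + n) = J i + n) (i : ℤ) :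
    ∃ r ∈ Icc 1 n, J i - i = J r - r := by
  obtain ⟨r, hr, t, rfl⟩ := exists_mem_Icc_eq_add_mul hn i
  exact ⟨r, hr, by rw [map_add_mul_of_map_add hJ]; ring⟩

lemma eq_of_modEq_of_mem_Icc {a b : ℤ} (ha : a ∈ Icc 1 n) (hb : b ∈ Icc 1 n)
    (h : a ≡ b [ZMOD n]) : a = b := by
  rw [mem_Icc] at ha hb
  have := Int.eq_zero_of_abs_lt_dvd (Int.modEq_iff_dvd.1 h) (abs_lt.2 ⟨by omega, by omega⟩)
  omega

lemma bijective_of_modEq_injOn (hn : 0 < n) (hJ : ∀ i, J (i + n) = J i + n)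
    (h : ∀ r ∈ Icc 1 n, ∀ s ∈ Icc 1 n, J r ≡ J s [ZMOD n] → r = s) : Bijective J := by
  constructor
  · intro i j hij
    obtain ⟨r, hr, t, rfl⟩ := exists_mem_Icc_eq_add_mul hn i
    obtain ⟨s, hs, u, rfl⟩ := exists_mem_Icc_eq_add_mul hn j
    rw [map_add_mul_of_map_add hJ, map_add_mul_of_map_add hJ] at hij
    obtain rfl : r = s := h r hr s hs (Int.modEq_iff_dvd.2 ⟨t - u, by linarith⟩)
    rw [mul_left_cancel₀ hn.ne' (add_left_cancel hij)]
  · intro m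
    have hmaps : Set.MapsTo (J · % n) (Icc 1 n) (Ico 0 n) := fun r _ =>
      mem_Ico.2 ⟨Int.emod_nonneg _ hn.ne', Int.emod_lt_of_pos _ hn⟩
    obtain ⟨r, hr, hrm⟩ := surjOn_of_injOn_of_card_le _ hmaps (fun r hr s hs => h r hr s hs)
      (by simp) (mem_Ico.2 ⟨Int.emod_nonneg m hn.ne', Int.emod_lt_of_pos m hn⟩)
    obtain ⟨t, ht⟩ := Int.modEq_iff_dvd.1 hrm
    exact ⟨r + n * t, by rw [map_add_mul_of_map_add hJ]; linarith⟩

end AddPeriodic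

section OrderEmbOfFin

variable {α : Type*} [LinearOrder α]

lemma card_filter_le_orderEmbOfFin {s : Finset α} {m : ℕ} (h : #s = m) (k : Fin m) :
    #(s.filter (· ≤ s.orderEmbOfFin h k)) = k + 1 := by
  subst h
  have : s.filter (· ≤ s.orderEmbOfFin rfl k) = (Iic k).map (s.orderEmbOfFin rfl).toEmbedding := by
    ext x
    simp only [mem_filter, mem_map, mem_Iic, RelEmbedding.coe_toEmbedding]
    constructor
    · rintro ⟨hx, hxk⟩
      obtain ⟨j, rfl⟩ : x ∈ Set.range (s.orderEmbOfFin rfl) := by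
        rwa [range_orderEmbOfFin]
      exact ⟨j, (s.orderEmbOfFin rfl).le_iff_le.1 hxk, rfl⟩
    · rintro ⟨j, hj, rfl⟩
      exact ⟨orderEmbOfFin_mem _ _ _, (s.orderEmbOfFin rfl).monotone hj⟩
  rw [this, card_map, Fin.card_Iic]

lemma orderEmbOfFin_le_of_card_filter_le {s t : Finset α} (hts : #t = #s)
    (h : ∀ a, #(s.filter (· ≤ a)) ≤ #(t.filter (· ≤ a))) (k : Fin #s) :
    t.orderEmbOfFin hts k ≤ s.orderEmbOfFin rfl k := by
  by_contra! hlt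
  set a := s.orderEmbOfFin rfl k
  set b := t.orderEmbOfFin hts k
  have hsub : t.filter (· ≤ a) ⊂ t.filter (· ≤ b) := by
    have hle : t.filter (· ≤ a) ⊆ t.filter (· ≤ b) :=
      monotone_filter_right t fun x _ (hx : x ≤ a) => hx.trans hlt.le
    refine (ssubset_iff_of_subset hle).2 ⟨b, ?_, fun hb => (mem_filter.1 hb).2.not_gt hlt⟩
    exact mem_filter.2 ⟨orderEmbOfFin_mem _ _ _, le_rfl⟩
  have hcard := (h a).trans_lt (card_lt_card hsub)
  rw [card_filter_le_orderEmbOfFin, card_filter_le_orderEmbOfFin] at hcard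
  exact hcard.false

lemma exists_strictMonoOn_mapsTo_le {s t : Finset α} (hts : #t = #s)
    (h : ∀ a, #(s.filter (· ≤ a)) ≤ #(t.filter (· ≤ a))) :
    ∃ σ : α → α, StrictMonoOn σ s ∧ Set.MapsTo σ s t ∧ ∀ x ∈ s, σ x ≤ x := by
  set e := s.orderEmbOfFin rfl
  set e' := t.orderEmbOfFin hts
  have hs : ∀ x ∈ s, ∃ k, e k = x := fun x hx => by
    rwa [← Set.mem_range, range_orderEmbOfFin]
  refine ⟨extend e e' id, fun x hx y hy hxy => ?_, fun x hx => ?_, fun x hx => ?_⟩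
  · obtain ⟨⟨k, rfl⟩, ⟨l, rfl⟩⟩ := And.intro (hs x hx) (hs y hy)
    rw [e.injective.extend_apply, e.injective.extend_apply]
    exact e'.strictMono (e.lt_iff_lt.1 hxy)
  · obtain ⟨k, rfl⟩ := hs x hx
    rw [e.injective.extend_apply]
    exact orderEmbOfFin_mem _ _ _
  · obtain ⟨k, rfl⟩ := hs x hx
    rw [e.injective.extend_apply]
    exact orderEmbOfFin_le_of_card_filter_le hts h k

lemma eqOn_of_strictMonoOn_of_mapsTo {β : Type*} [LinearOrder β] {s : Finset α} {t : Finset β}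
    (hts : #t = #s) {f g : α → β} (hf : StrictMonoOn f s) (hg : StrictMonoOn g s)
    (hfst : Set.MapsTo f s t) (hgst : Set.MapsTo g s t) : Set.EqOn f g s := by
  set e := s.orderEmbOfFin rfl
  have hunique {f : α → β} (hf : StrictMonoOn f s) (hfst : Set.MapsTo f s t) :
      f ∘ e = t.orderEmbOfFin hts :=
    orderEmbOfFin_unique hts (fun k => hfst (orderEmbOfFin_mem _ _ k))
      fun k l hkl => hf (orderEmbOfFin_mem _ _ k) (orderEmbOfFin_mem _ _ l) (e.strictMono hkl)
  intro x hx
  obtain ⟨k, rfl⟩ : x ∈ Set.range e := by rwa [range_orderEmbOfFin]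
  exact congrFun ((hunique hf hfst).trans (hunique hg hgst).symm) k

end OrderEmbOfFin

/-- Rows and columns of `{1,…,n}` missed by the partial permutation matrix with a `1` at
`(i, π i)` for `i ∈ D`. -/
noncomputable def emptyRows (n : ℕ) (D : Finset ℤ) : Finset ℤ := Icc 1 (n : ℤ) \ D

noncomputable def emptyCols (n : ℕ) (D : Finset ℤ) (π : ℤ → ℤ) : Finset ℤ :=
  Icc 1 (n : ℤ) \ D.image π

section PartialPerm

variable {n : ℕ} {D : Finset ℤ} {π J : ℤ → ℤ}

lemma mem_emptyRows {i : ℤ} : i ∈ emptyRows n D ↔ i ∈ Icc 1 (n : ℤ) ∧ i ∉ D := mem_sdiff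

lemma mem_emptyCols {i : ℤ} : i ∈ emptyCols n D π ↔ i ∈ Icc 1 (n : ℤ) ∧ i ∉ D.image π :=
  mem_sdiff

lemma card_emptyCols (hD : D ⊆ Icc 1 (n : ℤ)) (hmem : Set.MapsTo π D (Icc 1 (n : ℤ)))
    (hinj : Set.InjOn π D) : #(emptyCols n D π) = #(emptyRows n D) := by
  rw [emptyCols, emptyRows, card_sdiff_of_subset hmem.finsetImage_subset,
    card_sdiff_of_subset hD, card_image_of_injOn hinj]

lemma card_filter_emptyRows_le (hD : D ⊆ Icc 1 (n : ℤ)) (hmem : Set.MapsTo π D (Icc 1 (n : ℤ)))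
    (hup : ∀ i ∈ D, i ≤ π i) (t : ℤ) :
    #((emptyRows n D).filter (· ≤ t)) ≤ #((emptyCols n D π).filter (· ≤ t)) := by
  have hsplit : ∀ v ⊆ Icc 1 (n : ℤ), #((Icc 1 (n : ℤ) \ v).filter (· ≤ t)) + #(v.filter (· ≤ t))
      = #((Icc 1 (n : ℤ)).filter (· ≤ t)) := fun v hv => by
    rw [← card_union_of_disjoint (disjoint_filter_filter sdiff_disjoint), ← filter_union,
      sdiff_union_of_subset hv]
  have himage : #((D.image π).filter (· ≤ t)) ≤ #(D.filter (· ≤ t)) := by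
    rw [filter_image]
    exact card_image_le.trans
      (card_le_card (monotone_filter_right D fun i hi (hit : π i ≤ t) => (hup i hi).trans hit))
  have := hsplit D hD
  have := hsplit _ hmem.finsetImage_subset
  rw [emptyRows, emptyCols]
  omega

lemma exists_window_extension (hn : 1 ≤ n) (hD : D ⊆ Icc 1 (n : ℤ))
    (hmem : Set.MapsTo π D (Icc 1 (n : ℤ))) (hinj : Set.InjOn π D) (hup : ∀ i ∈ D, i ≤ π i) :
    ∃ J : ℤ → ℤ, (∀ i, J (i + n) = J i + n) ∧ (∀ i ∈ D, J i = π i) ∧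
      StrictMonoOn J (emptyRows n D) ∧ Set.MapsTo (J · - n) (emptyRows n D) (emptyCols n D π) ∧
      ∀ i ∈ emptyRows n D, J i ≤ i + n := by
  obtain ⟨σ, hσmono, hσmaps, hσle⟩ := exists_strictMonoOn_mapsTo_le
    (card_emptyCols hD hmem hinj) (card_filter_emptyRows_le hD hmem hup)
  obtain ⟨J, hJ, hJw⟩ := exists_map_add_eqOn_Icc (by omega : (0 : ℤ) < n)
    fun i => if i ∈ D then π i else n + σ i
  have hJE : ∀ i ∈ emptyRows n D, J i = n + σ i := fun i hi => by
    rw [hJw i (mem_emptyRows.1 hi).1, if_neg (mem_emptyRows.1 hi).2]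
  refine ⟨J, hJ, fun i hi => by rw [hJw i (hD hi), if_pos hi], fun i hi j hj hij => ?_,
    fun i hi => ?_, fun i hi => ?_⟩
  · rw [hJE i hi, hJE j hj]
    exact add_lt_add_right (hσmono hi hj hij) _
  · simpa only [hJE i hi, add_sub_cancel_left] using hσmaps hi
  · linarith [hJE i hi, hσle i hi]

lemma sub_nonneg_and_sub_le_of_mem_Icc (hmem : Set.MapsTo π D (Icc 1 (n : ℤ)))
    (hup : ∀ i ∈ D, i ≤ π i) (hJD : ∀ i ∈ D, J i = π i)
    (hJE : Set.MapsTo (J · - n) (emptyRows n D) (emptyCols n D π))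
    (hle : ∀ i ∈ emptyRows n D, J i ≤ i + n)
    {r : ℤ} (hr : r ∈ Icc 1 (n : ℤ)) : 0 ≤ J r - r ∧ J r - r ≤ n := by
  have := mem_Icc.1 hr
  by_cases hrD : r ∈ D
  · have := mem_Icc.1 (hmem hrD)
    have := hup r hrD
    rw [hJD r hrD]
    omega
  · have hrE := mem_emptyRows.2 ⟨hr, hrD⟩
    have : 1 ≤ J r - n ∧ J r - n ≤ n := mem_Icc.1 (mem_emptyCols.1 (hJE hrE)).1
    have := hle r hrE
    omega

lemma eq_of_apply_modEq (hmem : Set.MapsTo π D (Icc 1 (n : ℤ))) (hinj : Set.InjOn π D)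
    (hJD : ∀ i ∈ D, J i = π i) (hJE : Set.MapsTo (J · - n) (emptyRows n D) (emptyCols n D π))
    (hmono : StrictMonoOn J (emptyRows n D))
    {r s : ℤ} (hr : r ∈ Icc 1 (n : ℤ)) (hs : s ∈ Icc 1 (n : ℤ)) (hrs : J r ≡ J s [ZMOD n]) :
    r = s := by
  have hcol {i} (hi : i ∈ emptyRows n D) := mem_emptyCols.1 (hJE hi)
  have hmix {i j} (hi : i ∈ D) (hj : j ∈ emptyRows n D) : ¬ J i ≡ J j [ZMOD n] := fun h => by
    rw [hJD i hi] at h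
    have := eq_of_modEq_of_mem_Icc (hmem hi) (hcol hj).1 (Int.modEq_sub_modulus_iff.2 h)
    exact (hcol hj).2 (this ▸ mem_image_of_mem π hi)
  by_cases hrD : r ∈ D <;> by_cases hsD : s ∈ D
  · rw [hJD r hrD, hJD s hsD] at hrs
    exact hinj hrD hsD (eq_of_modEq_of_mem_Icc (hmem hrD) (hmem hsD) hrs)
  · exact absurd hrs (hmix hrD (mem_emptyRows.2 ⟨hs, hsD⟩))
  · exact absurd hrs.symm (hmix hsD (mem_emptyRows.2 ⟨hr, hrD⟩))
  · have hrE := mem_emptyRows.2 ⟨hr, hrD⟩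
    have hsE := mem_emptyRows.2 ⟨hs, hsD⟩
    have := eq_of_modEq_of_mem_Icc (hcol hrE).1 (hcol hsE).1 (hrs.sub_right _)
    exact hmono.injOn hrE hsE (sub_left_inj.1 this)

lemma sub_mem_emptyCols (hD : D ⊆ Icc 1 (n : ℤ)) (hJinj : Injective J)
    (hJ : ∀ i, J (i + n) = J i + n) (hle : ∀ i, J i ≤ i + n) (hJD : ∀ i ∈ D, J i = π i)
    {i : ℤ} (hi : i ∈ emptyRows n D) (hgt : (n : ℤ) < J i) : J i - n ∈ emptyCols n D π := by
  obtain ⟨hiI, -⟩ := mem_emptyRows.1 hi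
  have := mem_Icc.1 hiI
  refine mem_emptyCols.2 ⟨mem_Icc.2 ⟨by omega, by linarith [hle i]⟩, fun himg => ?_⟩
  obtain ⟨j, hj, hji⟩ := mem_image.1 himg
  -- `J i = J (j + n)`, but `i ≤ n < j + n`
  have := hJinj (show J (j + n) = J i by rw [hJ, hJD j hj, hji, sub_add_cancel])
  have := mem_Icc.1 (hD hj)
  omega

lemma eq_of_mapsTo_emptyCols (hn : 0 < n) (hcard : #(emptyCols n D π) = #(emptyRows n D))
    {J' : ℤ → ℤ} (hJ : ∀ i, J (i + n) = J i + n) (hJ' : ∀ i, J' (i + n) = J' i + n)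
    (hJD : ∀ i ∈ D, J i = π i) (hJD' : ∀ i ∈ D, J' i = π i)
    (hmono : StrictMonoOn J (emptyRows n D)) (hmono' : StrictMonoOn J' (emptyRows n D))
    (hJE : Set.MapsTo (J · - n) (emptyRows n D) (emptyCols n D π))
    (hJE' : Set.MapsTo (J' · - n) (emptyRows n D) (emptyCols n D π)) : J = J' := by
  have hE := eqOn_of_strictMonoOn_of_mapsTo hcard
    (fun i hi j hj hij => sub_lt_sub_right (hmono hi hj hij) _)
    (fun i hi j hj hij => sub_lt_sub_right (hmono' hi hj hij) _) hJE hJE'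
  refine eq_of_eqOn_Icc (by exact_mod_cast hn) hJ hJ' fun r hr => ?_
  by_cases hrD : r ∈ D
  · rw [hJD r hrD, hJD' r hrD]
  · exact sub_left_inj.1 (hE (mem_emptyRows.2 ⟨hr, hrD⟩))

end PartialPerm

/-- Every upper triangular partial permutation matrix (a partial injection `π`
defined on `D ⊆ {1,…,n}` with values in `{1,…,n}` and `π i ≥ i`) extends
uniquely to the window of a bounded juggling pattern of period `n` whose East
triangle runs northwest-to-southeast: there is a unique bijection `J : ℤ → ℤ`
with `J (i+n) = J i + n`, `0 ≤ J i - i ≤ n`, `J = π` on `D`, `J i > n` for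
`i ∈ {1,…,n} \ D`, and `J` strictly increasing on `{1,…,n} \ D`. -/
theorem partialPerm_extends_uniquely (n : ℕ) (hn : 1 ≤ n)
    (D : Finset ℤ) (hD : D ⊆ Finset.Icc (1 : ℤ) (n : ℤ))
    (π : ℤ → ℤ)
    (hmem : ∀ i ∈ D, π i ∈ Finset.Icc (1 : ℤ) (n : ℤ))
    (hinj : ∀ i ∈ D, ∀ j ∈ D, π i = π j → i = j)
    (hup : ∀ i ∈ D, i ≤ π i) :
    ∃! J : ℤ → ℤ,
      Function.Bijective J ∧
      (∀ i : ℤ, J (i + n) = J i + n) ∧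
      (∀ i : ℤ, 0 ≤ J i - i ∧ J i - i ≤ n) ∧
      (∀ i ∈ D, J i = π i) ∧
      (∀ i ∈ Finset.Icc (1 : ℤ) (n : ℤ), i ∉ D → (n : ℤ) < J i) ∧
      (∀ i ∈ Finset.Icc (1 : ℤ) (n : ℤ), ∀ j ∈ Finset.Icc (1 : ℤ) (n : ℤ),
        i ∉ D → j ∉ D → i < j → J i < J j) := by
  have hn' : (0 : ℤ) < n := by exact_mod_cast hn
  obtain ⟨J, hJ, hJD, hmono, hJE, hle⟩ := exists_window_extension hn hD hmem hinj hup
  refine ⟨J, ⟨bijective_of_modEq_injOn hn' hJ fun r hr s hs =>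
      eq_of_apply_modEq hmem hinj hJD hJE hmono hr hs, hJ, fun i => ?_,
    hJD, fun i hi hiD => ?_, fun i hi j hj hiD hjD =>
      hmono (mem_emptyRows.2 ⟨hi, hiD⟩) (mem_emptyRows.2 ⟨hj, hjD⟩)⟩, ?_⟩
  · obtain ⟨r, hr, hri⟩ := exists_mem_Icc_sub_eq_sub hn' hJ i
    exact hri ▸ sub_nonneg_and_sub_le_of_mem_Icc hmem hup hJD hJE hle hr
  · have : 1 ≤ J i - n ∧ J i - n ≤ n :=
      mem_Icc.1 (mem_emptyCols.1 (hJE (mem_emptyRows.2 ⟨hi, hiD⟩))).1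
    omega
  rintro J' ⟨hbij', hJ', hb', hJD', hgt', hmono'⟩
  have hE {i} (hi : i ∈ emptyRows n D) := mem_emptyRows.1 hi
  refine eq_of_mapsTo_emptyCols hn (card_emptyCols hD hmem hinj) hJ' hJ hJD' hJD
    (fun i hi j hj => hmono' i (hE hi).1 j (hE hj).1 (hE hi).2 (hE hj).2) hmono
    (fun i hi => sub_mem_emptyCols hD hbij'.1 hJ' (fun i => by linarith [hb' i]) hJD' hi
      (hgt' i (hE hi).1 (hE hi).2)) hJE
end
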